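/- Let F be a real n×p matrix and let k ≥ 1 be an even integer with 2.5k ≤ p satisfying δ_{1.5k} + θ_{k,1.5k} < 1. Let β ∈ ℝ^p be a k-sparse vector and y = Fβ + z with ‖z‖₂ ≤ ε. Then for any η ≥ ε, if β̂ is a minimizer of ‖γ‖₁ over all γ ∈ ℝ^p with ‖y − Fγ‖₂ ≤ η, then ‖β̂ − β‖₂ ≤ C(η + ε), where C = √2(1 + δ_{1.5k}) / (1 − δ_{1.5k} − θ_{k,1.5k}). -/

import Mathlib

/-- A vector `v ∈ ℝ^p` is `k`-sparse if it has at most `k` nonzero entries. -/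
def IsSparse {p : ℕ} (k : ℕ) (v : Fin p → ℝ) : Prop :=
  ∃ s : Finset (Fin p), s.card ≤ k ∧ ∀ i ∉ s, v i = 0

/-- The ℓ₂ norm of a vector in `ℝ^m`. -/
noncomputable def l2norm {m : ℕ} (v : Fin m → ℝ) : ℝ :=
  Real.sqrt (∑ i, v i ^ 2)

/-- The ℓ₁ norm of a vector in `ℝ^m`. -/
def l1norm {m : ℕ} (v : Fin m → ℝ) : ℝ := ∑ i, |v i|

/-- The `k`-restricted isometry constant `δ_k` of `F`: the smallest `δ` such that
`√(1-δ)‖c‖₂ ≤ ‖Fc‖₂ ≤ √(1+δ)‖c‖₂` for every `k`-sparse vector `c`. -/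
noncomputable def ripConst {n p : ℕ} (F : Matrix (Fin n) (Fin p) ℝ) (k : ℕ) : ℝ :=
  sInf {δ : ℝ | ∀ c : Fin p → ℝ, IsSparse k c →
    Real.sqrt (1 - δ) * l2norm c ≤ l2norm (F.mulVec c) ∧
    l2norm (F.mulVec c) ≤ Real.sqrt (1 + δ) * l2norm c}

/-- The `(k,k')`-restricted orthogonality constant `θ_{k,k'}` of `F`: the smallest `θ` such
that `|⟨Fc, Fc'⟩| ≤ θ‖c‖₂‖c'‖₂` for all `k`-sparse `c` and `k'`-sparse `c'` with disjoint
supports. -/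
noncomputable def roConst {n p : ℕ} (F : Matrix (Fin n) (Fin p) ℝ) (k k' : ℕ) : ℝ :=
  sInf {θ : ℝ | ∀ c c' : Fin p → ℝ, IsSparse k c → IsSparse k' c' →
    (∀ i, c i = 0 ∨ c' i = 0) →
    |∑ i, F.mulVec c i * F.mulVec c' i| ≤ θ * (l2norm c * l2norm c')}

/-!
Put `h = β̂ - β` and let `T₀ ⊇ supp β` with `|T₀| ≤ k`. Minimality of `β̂` against the feasible
point `β` gives the cone condition `‖h_{T₀ᶜ}‖₁ ≤ ‖h_{T₀}‖₁`, and feasibility of both gives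
`‖Fh‖₂ ≤ η + ε`. Sort `T₀ᶜ` by decreasing `|h|`; the first `k/2` entries together with `T₀` form a
head block `h₀` of size at most `1.5k`, the rest is cut into consecutive blocks `h_j` of size `k`.
The shifting inequality (for a nonincreasing sequence, the ℓ₂ norm of a window of length `k` is at
most `1/√k` times the ℓ₁ norm of the window shifted back by `k/2`) gives
`∑ ‖h_j‖₂ ≤ ‖h_{T₀ᶜ}‖₁/√k ≤ ‖h_{T₀}‖₁/√k ≤ ‖h₀‖₂`. Expanding `‖Fh₀‖² = ⟨Fh, Fh₀⟩ - ∑ ⟨Fh_j, Fh₀⟩`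
and using `δ_{1.5k}`, `θ_{k,1.5k}` yields `(1 - δ - θ)‖h₀‖₂ ≤ √(1 + δ)(η + ε)`, while
`‖h‖₂² = ‖h₀‖₂² + ∑ ‖h_j‖₂² ≤ 2‖h₀‖₂²`.
-/

open Finset Matrix
open scoped RealInnerProductSpace

lemma l2norm_nonneg {m : ℕ} (v : Fin m → ℝ) : 0 ≤ l2norm v := Real.sqrt_nonneg _

lemma l2norm_sq {m : ℕ} (v : Fin m → ℝ) : l2norm v ^ 2 = ∑ i, v i ^ 2 :=
  Real.sq_sqrt (by positivity)

lemma l2norm_eq_norm {m : ℕ} (v : Fin m → ℝ) : l2norm v = ‖WithLp.toLp 2 v‖ := by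
  simp [EuclideanSpace.norm_eq, l2norm]

lemma sum_mul_eq_inner {m : ℕ} (v w : Fin m → ℝ) :
    ∑ i, v i * w i = ⟪WithLp.toLp 2 v, WithLp.toLp 2 w⟫ := by
  simp [EuclideanSpace.inner_toLp_toLp, dotProduct, mul_comm]

lemma l2norm_sub_le {m : ℕ} (v w : Fin m → ℝ) :
    l2norm (fun i => v i - w i) ≤ l2norm v + l2norm w := by
  rw [show (fun i => v i - w i) = v - w from rfl]
  simpa only [l2norm_eq_norm, ← WithLp.toLp_sub] using
    norm_sub_le (WithLp.toLp 2 v) (WithLp.toLp 2 w)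

lemma l2norm_mulVec_le {n p : ℕ} (F : Matrix (Fin n) (Fin p) ℝ) (c : Fin p → ℝ) :
    l2norm (F *ᵥ c) ≤ Real.sqrt (∑ i, ∑ j, F i j ^ 2) * l2norm c := by
  rw [l2norm, l2norm, ← Real.sqrt_mul (by positivity), sum_mul]
  gcongr with i
  simpa [mulVec, dotProduct] using sum_mul_sq_le_sq_mul_sq univ (F i) c

-- A set of reals unbounded below has `sInf = 0`, and an upper set unbounded below contains `0`.
lemma sInf_mem_of_isClosed_of_isUpperSet {S : Set ℝ} (hc : IsClosed S) (hu : IsUpperSet S)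
    (hne : S.Nonempty) : sInf S ∈ S := by
  by_cases hb : BddBelow S
  · exact hc.csInf_mem hne hb
  · rw [Real.sInf_of_not_bddBelow hb]
    obtain ⟨a, ha, ha0⟩ : ∃ a ∈ S, a < 0 := by simpa [BddBelow, lowerBounds] using (hb ⟨0, ·⟩)
    exact hu ha0.le ha

lemma sInf_nonneg_of_neg_mem_imp_eq_univ {S : Set ℝ} (h : ∀ a ∈ S, a < 0 → S = Set.univ) :
    0 ≤ sInf S := by
  by_cases hneg : ∃ a ∈ S, a < 0
  · obtain ⟨a, ha, ha0⟩ := hneg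
    rw [h a ha ha0, Real.sInf_univ]
  · push Not at hneg
    exact Real.sInf_nonneg hneg

section RestrictedConstants

variable {n p : ℕ} (F : Matrix (Fin n) (Fin p) ℝ)

-- `ripConst F k` and `roConst F k k'` are by definition the infima of the admissible bounds below.
def IsRIPBound (k : ℕ) (δ : ℝ) : Prop :=
  ∀ c : Fin p → ℝ, IsSparse k c →
    Real.sqrt (1 - δ) * l2norm c ≤ l2norm (F *ᵥ c) ∧ l2norm (F *ᵥ c) ≤ Real.sqrt (1 + δ) * l2norm c

def IsROBound (k k' : ℕ) (θ : ℝ) : Prop :=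
  ∀ c c' : Fin p → ℝ, IsSparse k c → IsSparse k' c' → (∀ i, c i = 0 ∨ c' i = 0) →
    |∑ i, (F *ᵥ c) i * (F *ᵥ c') i| ≤ θ * (l2norm c * l2norm c')

lemma ripConst_isRIPBound (k : ℕ) : IsRIPBound F k (ripConst F k) := by
  refine sInf_mem_of_isClosed_of_isUpperSet (S := {δ | IsRIPBound F k δ}) ?_ ?_ ?_
  · simp only [IsRIPBound, Set.ofPred_forall, Set.ofPred_and]
    exact isClosed_iInter fun c => isClosed_iInter fun _ =>
      (isClosed_le (by fun_prop) continuous_const).inter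
        (isClosed_le continuous_const (by fun_prop))
  · intro a b hab ha c hc
    obtain ⟨hlow, hup⟩ := ha c hc
    exact ⟨le_trans (by gcongr; exact l2norm_nonneg c) hlow,
      hup.trans (by gcongr; exact l2norm_nonneg c)⟩
  · refine ⟨1 + ∑ i, ∑ j, F i j ^ 2, fun c _ => ⟨?_, ?_⟩⟩
    · rw [Real.sqrt_eq_zero_of_nonpos (by linarith [show 0 ≤ ∑ i, ∑ j, F i j ^ 2 by positivity]),
        zero_mul]
      exact l2norm_nonneg _
    · exact (l2norm_mulVec_le F c).trans
        (mul_le_mul_of_nonneg_right (Real.sqrt_le_sqrt (by linarith)) (l2norm_nonneg c))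

-- An admissible `δ < 0` forces `Fc = 0` and `c = 0` for every sparse `c`, so then every `δ` is.
lemma ripConst_nonneg (k : ℕ) : 0 ≤ ripConst F k := by
  refine sInf_nonneg_of_neg_mem_imp_eq_univ fun δ hδ hδ0 => Set.eq_univ_of_forall fun δ' c hc => ?_
  obtain ⟨hlow, hup⟩ := hδ c hc
  have hsqrt : Real.sqrt (1 + δ) < Real.sqrt (1 - δ) :=
    (Real.sqrt_lt_sqrt_iff_of_pos (by linarith)).mpr (by linarith)
  have hc0 : l2norm c = 0 := by nlinarith [l2norm_nonneg c]
  have hFc0 : l2norm (F *ᵥ c) = 0 := le_antisymm (by simpa [hc0] using hup) (l2norm_nonneg _)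
  simp [hc0, hFc0]

lemma roConst_isROBound (k k' : ℕ) : IsROBound F k k' (roConst F k k') := by
  refine sInf_mem_of_isClosed_of_isUpperSet (S := {θ | IsROBound F k k' θ}) ?_ ?_ ?_
  · simp only [IsROBound, Set.ofPred_forall]
    exact isClosed_iInter fun c => isClosed_iInter fun c' => isClosed_iInter fun _ =>
      isClosed_iInter fun _ => isClosed_iInter fun _ => isClosed_le continuous_const (by fun_prop)
  · intro a b hab ha c c' hc hc' hdisj
    exact (ha c c' hc hc' hdisj).trans
      (by gcongr; exact mul_nonneg (l2norm_nonneg _) (l2norm_nonneg _))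
  · refine ⟨∑ i, ∑ j, F i j ^ 2, fun c c' _ _ _ => ?_⟩
    calc |∑ i, (F *ᵥ c) i * (F *ᵥ c') i| ≤ l2norm (F *ᵥ c) * l2norm (F *ᵥ c') := by
          rw [sum_mul_eq_inner, l2norm_eq_norm, l2norm_eq_norm]
          exact abs_real_inner_le_norm _ _
      _ ≤ (Real.sqrt (∑ i, ∑ j, F i j ^ 2) * l2norm c) *
          (Real.sqrt (∑ i, ∑ j, F i j ^ 2) * l2norm c') :=
        mul_le_mul (l2norm_mulVec_le F c) (l2norm_mulVec_le F c') (l2norm_nonneg _)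
          (mul_nonneg (Real.sqrt_nonneg _) (l2norm_nonneg _))
      _ = _ := by rw [mul_mul_mul_comm, Real.mul_self_sqrt (by positivity)]

lemma roConst_nonneg (k k' : ℕ) : 0 ≤ roConst F k k' := by
  refine sInf_nonneg_of_neg_mem_imp_eq_univ fun θ hθ hθ0 =>
    Set.eq_univ_of_forall fun θ' c c' hc hc' hdisj => ?_
  have h := hθ c c' hc hc' hdisj
  have hprod : l2norm c * l2norm c' = 0 := by
    nlinarith [abs_nonneg (∑ i, (F *ᵥ c) i * (F *ᵥ c') i),
      mul_nonneg (l2norm_nonneg c) (l2norm_nonneg c')]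
  rw [hprod] at h ⊢
  simpa using h

end RestrictedConstants

lemma sum_range_succ_ite_eq_of_le {M : Type*} [AddCommMonoid M] {a L : ℕ} (ha : a ≤ L) (x : M) :
    ∑ j ∈ range (L + 1), (if a = j then x else 0) = x := by
  rw [sum_ite_eq, if_pos (mem_range.mpr (Nat.lt_succ_of_le ha))]

section Blocks

variable {p : ℕ} (ℓ : Fin p → ℕ) (h : Fin p → ℝ)

def block (j : ℕ) : Fin p → ℝ := fun i => if ℓ i = j then h i else 0

lemma block_zero_add_sum_block {L : ℕ} (hℓ : ∀ i, ℓ i ≤ L) :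
    block ℓ h 0 + ∑ j ∈ range L, block ℓ h (j + 1) = h := by
  funext i
  rw [add_comm, ← sum_range_succ' (block ℓ h), Finset.sum_apply]
  exact sum_range_succ_ite_eq_of_le (hℓ i) (h i)

lemma l2norm_block_sq (j : ℕ) :
    l2norm (block ℓ h j) ^ 2 = ∑ i, if ℓ i = j then h i ^ 2 else 0 := by
  rw [l2norm_sq]
  congr! 1 with i
  unfold block
  split_ifs <;> simp

lemma l2norm_sq_eq_sum_block {L : ℕ} (hℓ : ∀ i, ℓ i ≤ L) :
    l2norm h ^ 2 = l2norm (block ℓ h 0) ^ 2 + ∑ j ∈ range L, l2norm (block ℓ h (j + 1)) ^ 2 := by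
  rw [add_comm, ← sum_range_succ' (fun j => l2norm (block ℓ h j) ^ 2)]
  simp only [l2norm_block_sq]
  rw [l2norm_sq, sum_comm]
  exact sum_congr rfl fun i _ => (sum_range_succ_ite_eq_of_le (hℓ i) (h i ^ 2)).symm

lemma isSparse_block {k j : ℕ} (hk : #{i | ℓ i = j} ≤ k) : IsSparse k (block ℓ h j) :=
  ⟨({i | ℓ i = j} : Finset (Fin p)), hk, fun i hi => if_neg (by simpa using hi)⟩

lemma l2norm_le_sqrt_two_mul_l2norm_block_zero {L : ℕ} (hℓ : ∀ i, ℓ i ≤ L)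
    (htail : ∑ j ∈ range L, l2norm (block ℓ h (j + 1)) ≤ l2norm (block ℓ h 0)) :
    l2norm h ≤ Real.sqrt 2 * l2norm (block ℓ h 0) := by
  have htail_sq : ∑ j ∈ range L, l2norm (block ℓ h (j + 1)) ^ 2 ≤ l2norm (block ℓ h 0) ^ 2 :=
    (sum_sq_le_sq_sum_of_nonneg fun j _ => l2norm_nonneg _).trans
      (pow_le_pow_left₀ (sum_nonneg fun j _ => l2norm_nonneg _) htail 2)
  rw [← Real.sqrt_sq (l2norm_nonneg h), ← Real.sqrt_sq (l2norm_nonneg (block ℓ h 0)),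
    ← Real.sqrt_mul zero_le_two]
  exact Real.sqrt_le_sqrt (by rw [l2norm_sq_eq_sum_block ℓ h hℓ]; linarith)

lemma sum_abs_le_sqrt_card_mul_l2norm_block {s : Finset (Fin p)} {j : ℕ}
    (hs : ∀ i ∈ s, ℓ i = j) : ∑ i ∈ s, |h i| ≤ Real.sqrt #s * l2norm (block ℓ h j) := by
  have hsq : ∑ i ∈ s, h i ^ 2 ≤ l2norm (block ℓ h j) ^ 2 := by
    rw [l2norm_block_sq, ← sum_filter]
    exact sum_le_sum_of_subset_of_nonneg (fun i hi => by simpa using hs i hi)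
      fun i _ _ => sq_nonneg _
  calc ∑ i ∈ s, |h i| ≤ Real.sqrt (#s * ∑ i ∈ s, h i ^ 2) := by
        refine Real.le_sqrt_of_sq_le ?_
        simpa only [sq_abs] using sq_sum_le_card_mul_sum_sq (s := s) (f := fun i => |h i|)
    _ ≤ Real.sqrt (#s * l2norm (block ℓ h j) ^ 2) := by gcongr
    _ = Real.sqrt #s * l2norm (block ℓ h j) := by
        rw [Real.sqrt_mul (Nat.cast_nonneg _), Real.sqrt_sq (l2norm_nonneg _)]

end Blocks

lemma le_sqrt_mul_norm_add_sum_of_restricted_bounds {E ι : Type*} [NormedAddCommGroup E]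
    [InnerProductSpace ℝ E] (s : Finset ι) (w : E) (ws : ι → E) (xs : ι → ℝ) {X δ θ : ℝ}
    (hX : 0 ≤ X) (hθ : 0 ≤ θ) (hlow : Real.sqrt (1 - δ) * X ≤ ‖w‖)
    (hup : ‖w‖ ≤ Real.sqrt (1 + δ) * X) (horth : ∀ j ∈ s, |⟪ws j, w⟫| ≤ θ * (xs j * X))
    (hsum : ∑ j ∈ s, xs j ≤ X) :
    (1 - δ - θ) * X ≤ Real.sqrt (1 + δ) * ‖w + ∑ j ∈ s, ws j‖ := by
  set W := w + ∑ j ∈ s, ws j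
  have hlow_sq : (1 - δ) * X ^ 2 ≤ ‖w‖ ^ 2 := by
    rcases le_or_gt (1 - δ) 0 with hδ | hδ
    · nlinarith [sq_nonneg X, sq_nonneg ‖w‖]
    · calc (1 - δ) * X ^ 2 = (Real.sqrt (1 - δ) * X) ^ 2 := by rw [mul_pow, Real.sq_sqrt hδ.le]
        _ ≤ ‖w‖ ^ 2 := by gcongr
  have hnorm_sq : ‖w‖ ^ 2 = ⟪W, w⟫ - ∑ j ∈ s, ⟪ws j, w⟫ := by
    simp only [W, inner_add_left, sum_inner, real_inner_self_eq_norm_sq]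
    ring
  have hcross : -∑ j ∈ s, ⟪ws j, w⟫ ≤ θ * X * X :=
    calc -∑ j ∈ s, ⟪ws j, w⟫ = ∑ j ∈ s, -⟪ws j, w⟫ := (sum_neg_distrib _).symm
      _ ≤ ∑ j ∈ s, θ * (xs j * X) := sum_le_sum fun j hj => (neg_le_abs _).trans (horth j hj)
      _ = θ * X * ∑ j ∈ s, xs j := by rw [mul_sum]; exact sum_congr rfl fun j _ => by ring
      _ ≤ θ * X * X := by gcongr
  have hW : ⟪W, w⟫ ≤ ‖W‖ * (Real.sqrt (1 + δ) * X) :=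
    (real_inner_le_norm W w).trans (by gcongr)
  have key : (1 - δ - θ) * X * X ≤ Real.sqrt (1 + δ) * ‖W‖ * X := by nlinarith
  rcases hX.eq_or_lt with hX0 | hXpos
  · rw [← hX0, mul_zero]
    positivity
  · exact le_of_mul_le_mul_right key hXpos

lemma one_sub_ripConst_sub_roConst_mul_le {n p : ℕ} (F : Matrix (Fin n) (Fin p) ℝ) (s k : ℕ)
    (h : Fin p → ℝ) (ℓ : Fin p → ℕ) {L : ℕ} (hℓ : ∀ i, ℓ i ≤ L) (hs : #{i | ℓ i = 0} ≤ s)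
    (hk : ∀ j, #{i | ℓ i = j + 1} ≤ k)
    (htail : ∑ j ∈ range L, l2norm (block ℓ h (j + 1)) ≤ l2norm (block ℓ h 0)) :
    (1 - ripConst F s - roConst F k s) * l2norm (block ℓ h 0) ≤
      Real.sqrt (1 + ripConst F s) * l2norm (F *ᵥ h) := by
  let Ψ : (Fin p → ℝ) →ₗ[ℝ] EuclideanSpace ℝ (Fin n) :=
    (WithLp.linearEquiv 2 ℝ (Fin n → ℝ)).symm.toLinearMap ∘ₗ F.mulVecLin
  have hΨ : ∀ c, ‖Ψ c‖ = l2norm (F *ᵥ c) := fun c => (l2norm_eq_norm _).symm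
  have hu : IsSparse s (block ℓ h 0) := isSparse_block ℓ h hs
  have hdecomp : l2norm (F *ᵥ h) = ‖Ψ (block ℓ h 0) + ∑ j ∈ range L, Ψ (block ℓ h (j + 1))‖ := by
    rw [← map_sum, ← map_add, block_zero_add_sum_block ℓ h hℓ, hΨ]
  rw [hdecomp]
  refine le_sqrt_mul_norm_add_sum_of_restricted_bounds _ _ _ (fun j => l2norm (block ℓ h (j + 1)))
    (l2norm_nonneg _) (roConst_nonneg F k s) ?_ ?_ ?_ htail
  · exact (hΨ _).symm ▸ (ripConst_isRIPBound F s _ hu).1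
  · exact (hΨ _).symm ▸ (ripConst_isRIPBound F s _ hu).2
  · intro j _
    have hdisj : ∀ i, block ℓ h (j + 1) i = 0 ∨ block ℓ h 0 i = 0 := fun i => by
      by_cases hi : ℓ i = j + 1 <;> simp [block, hi]
    rw [← sum_mul_eq_inner]
    exact roConst_isROBound F k s _ _ (isSparse_block ℓ h (hk j)) hu hdisj

lemma sum_range_sum_Ico_mul {M : Type*} [AddCommMonoid M] (f : ℕ → M) (a L : ℕ) :
    ∑ j ∈ range L, ∑ q ∈ Ico (a * j) (a * j + a), f q = ∑ q ∈ range (a * L), f q := by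
  induction L with
  | zero => simp
  | succ L ih =>
    rw [sum_range_succ, ih, range_eq_Ico, range_eq_Ico, mul_add_one,
      sum_Ico_consecutive _ (Nat.zero_le _) le_self_add]

section Shifting

variable {c : ℕ → ℝ} (hc : Antitone c) (hc0 : ∀ q, 0 ≤ c q)
include hc hc0

lemma two_mul_sum_sq_Ico_le_sq_sum_Ico (t m : ℕ) :
    2 * m * ∑ q ∈ Ico (t + m) (t + 3 * m), c q ^ 2 ≤ (∑ q ∈ Ico t (t + 2 * m), c q) ^ 2 := by
  rw [show t + 3 * m = t + m + m + m by ring, show t + 2 * m = t + m + m by ring]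
  have hcard : ∀ a, #(Ico a (a + m)) = m := fun a => by simp
  set A := ∑ q ∈ Ico t (t + m), c q
  set B := ∑ q ∈ Ico (t + m) (t + m + m), c q
  have hA : m * c (t + m) ≤ A := by
    simpa [hcard, nsmul_eq_mul] using card_nsmul_le_sum (Ico t (t + m)) c _
      fun q hq => hc (mem_Ico.mp hq).2.le
  have hB_le : B ≤ m * c (t + m) := by
    simpa [hcard, nsmul_eq_mul] using
      sum_le_card_nsmul (Ico (t + m) (t + m + m)) c _ fun q hq => hc (mem_Ico.mp hq).1
  have hB : m * c (t + m + m) ≤ B := by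
    simpa [hcard, nsmul_eq_mul] using
      card_nsmul_le_sum (Ico (t + m) (t + m + m)) c _ fun q hq => hc (mem_Ico.mp hq).2.le
  have hQ₁ : ∑ q ∈ Ico (t + m) (t + m + m), c q ^ 2 ≤ c (t + m) * B := by
    rw [mul_sum]
    exact sum_le_sum fun q hq => by
      rw [sq]; exact mul_le_mul_of_nonneg_right (hc (mem_Ico.mp hq).1) (hc0 q)
  have hQ₂ : ∑ q ∈ Ico (t + m + m) (t + m + m + m), c q ^ 2 ≤ m * c (t + m + m) ^ 2 := by
    simpa [hcard, nsmul_eq_mul] using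
      sum_le_card_nsmul (Ico (t + m + m) (t + m + m + m)) (fun q => c q ^ 2) _ fun q hq =>
        pow_le_pow_left₀ (hc0 q) (hc (mem_Ico.mp hq).1) 2
  have hB0 : 0 ≤ B := sum_nonneg fun q _ => hc0 q
  have hb0 := hc0 (t + m + m)
  rw [← sum_Ico_consecutive _ (by omega : t + m ≤ t + m + m) (by omega),
    ← sum_Ico_consecutive _ (by omega : t ≤ t + m) (by omega)]
  nlinarith [mul_le_mul_of_nonneg_right hA hB0, mul_le_mul hB hB (by positivity) hB0]

lemma sqrt_two_mul_sum_sqrt_sum_sq_le (m L : ℕ) :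
    Real.sqrt (2 * m) *
        ∑ j ∈ range L, Real.sqrt (∑ q ∈ Ico (2 * m * j + m) (2 * m * j + 3 * m), c q ^ 2)
      ≤ ∑ q ∈ range (2 * m * L), c q := by
  rw [mul_sum, ← sum_range_sum_Ico_mul]
  refine sum_le_sum fun j _ => ?_
  rw [← Real.sqrt_mul (by positivity), ← Real.sqrt_sq (sum_nonneg fun q _ => hc0 q)]
  exact Real.sqrt_le_sqrt (two_mul_sum_sq_Ico_le_sq_sum_Ico hc hc0 _ _)

end Shifting

lemma exists_antitone_rearrangement {p : ℕ} (x : Fin p → ℝ) (hx : ∀ i, 0 ≤ x i) :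
    ∃ (σ : Equiv.Perm (Fin p)) (c : ℕ → ℝ), Antitone c ∧ (∀ q, 0 ≤ c q) ∧
      (∀ q : Fin p, c q = x (σ q)) ∧ ∀ q, p ≤ q → c q = 0 := by
  set σ := Tuple.sort (fun i => -x i)
  have hσ : Antitone (x ∘ σ) := fun a b hab =>
    neg_le_neg_iff.mp (Tuple.monotone_sort (fun i => -x i) hab)
  refine ⟨σ, fun q => if hq : q < p then x (σ ⟨q, hq⟩) else 0, fun a b hab => ?_,
    fun q => ?_, fun q => dif_pos q.isLt, fun q hq => dif_neg (by omega)⟩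
  · by_cases hb : b < p
    · simp only [hb, lt_of_le_of_lt hab hb, dif_pos]
      exact hσ (Fin.mk_le_mk.mpr hab)
    · simp only [hb, dif_neg, not_false_eq_true]
      split_ifs <;> simp [hx]
  · dsimp only
    split_ifs <;> simp [hx]

def blockIndex (m q : ℕ) : ℕ := if q < m then 0 else (q - m) / (2 * m) + 1

lemma blockIndex_le {m : ℕ} (hm : 0 < m) (q : ℕ) : blockIndex m q ≤ q := by
  unfold blockIndex
  split_ifs
  · exact Nat.zero_le q
  · have := Nat.div_le_self (q - m) (2 * m)
    omega

lemma lt_of_blockIndex_eq_zero {m q : ℕ} (h : blockIndex m q = 0) : q < m := by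
  unfold blockIndex at h
  split_ifs at h with hq
  · exact hq

lemma mem_Ico_of_blockIndex_eq_succ {m q j : ℕ} (hm : 0 < m) (h : blockIndex m q = j + 1) :
    q ∈ Ico (2 * m * j + m) (2 * m * j + 3 * m) := by
  unfold blockIndex at h
  split_ifs at h with hq
  have hj : (q - m) / (2 * m) = j := by omega
  have hdiv := Nat.div_add_mod (q - m) (2 * m)
  have hmod := Nat.mod_lt (q - m) (show 0 < 2 * m by omega)
  rw [hj] at hdiv
  rw [mem_Ico]
  omega

lemma card_filter_symm_mem_le {p : ℕ} (σ : Equiv.Perm (Fin p)) (S : Finset ℕ) :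
    #{i | (σ.symm i : ℕ) ∈ S} ≤ #S :=
  card_le_card_of_injOn (fun i => (σ.symm i : ℕ)) (fun i hi => by simpa using hi)
    fun i _ i' _ hii' => σ.symm.injective (Fin.ext hii')

section TailLabel

variable {p : ℕ} (T₀ : Finset (Fin p)) (σ : Equiv.Perm (Fin p)) (m : ℕ)

-- `σ.symm i` is the rank of `i` in the decreasing rearrangement of `|h|` off `T₀`.
def tailLabel (i : Fin p) : ℕ := if i ∈ T₀ then 0 else blockIndex m (σ.symm i)

lemma tailLabel_le {m : ℕ} (hm : 0 < m) (i : Fin p) : tailLabel T₀ σ m i ≤ p := by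
  unfold tailLabel
  split_ifs
  · exact Nat.zero_le p
  · exact (blockIndex_le hm _).trans (σ.symm i).isLt.le

lemma card_tailLabel_eq_zero_le : #{i | tailLabel T₀ σ m i = 0} ≤ #T₀ + m :=
  calc #{i | tailLabel T₀ σ m i = 0}
      ≤ #(T₀ ∪ ({i | (σ.symm i : ℕ) ∈ range m} : Finset (Fin p))) := by
        refine card_le_card fun i hi => ?_
        by_cases hT : i ∈ T₀
        · exact mem_union_left _ hT
        · have hidx : blockIndex m (σ.symm i) = 0 := by simpa [tailLabel, hT] using hi
          simpa using Or.inr (lt_of_blockIndex_eq_zero hidx)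
    _ ≤ #T₀ + m := (card_union_le _ _).trans (by simpa using card_filter_symm_mem_le σ (range m))

lemma blockIndex_of_tailLabel_eq_succ {i : Fin p} {j : ℕ} (hi : tailLabel T₀ σ m i = j + 1) :
    i ∉ T₀ ∧ blockIndex m (σ.symm i) = j + 1 := by
  by_cases hT : i ∈ T₀
  · simp [tailLabel, hT] at hi
  · exact ⟨hT, by simpa [tailLabel, hT] using hi⟩

lemma card_tailLabel_eq_succ_le {m : ℕ} (hm : 0 < m) (j : ℕ) :
    #{i | tailLabel T₀ σ m i = j + 1} ≤ 2 * m :=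
  calc #{i | tailLabel T₀ σ m i = j + 1}
      ≤ #{i | (σ.symm i : ℕ) ∈ Ico (2 * m * j + m) (2 * m * j + 3 * m)} :=
        card_le_card fun i hi => by
          simpa using mem_Ico_of_blockIndex_eq_succ hm
            (blockIndex_of_tailLabel_eq_succ T₀ σ m (by simpa using hi)).2
    _ ≤ 2 * m := (card_filter_symm_mem_le σ _).trans (by simp; omega)

lemma l2norm_block_tailLabel_le {m : ℕ} (hm : 0 < m) (h : Fin p → ℝ) {c : ℕ → ℝ}
    (hcx : ∀ q : Fin p, c q = if σ q ∈ T₀ᶜ then |h (σ q)| else 0) (j : ℕ) :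
    l2norm (block (tailLabel T₀ σ m) h (j + 1)) ≤
      Real.sqrt (∑ q ∈ Ico (2 * m * j + m) (2 * m * j + 3 * m), c q ^ 2) := by
  set I := Ico (2 * m * j + m) (2 * m * j + 3 * m)
  have hpointwise : ∀ q : Fin p, (if tailLabel T₀ σ m (σ q) = j + 1 then h (σ q) ^ 2 else 0) ≤
      if (q : ℕ) ∈ I then c q ^ 2 else 0 := fun q => by
    by_cases hq : tailLabel T₀ σ m (σ q) = j + 1
    · obtain ⟨hT, hidx⟩ := blockIndex_of_tailLabel_eq_succ T₀ σ m hq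
      rw [Equiv.symm_apply_apply] at hidx
      rw [if_pos hq, if_pos (mem_Ico_of_blockIndex_eq_succ hm hidx), hcx,
        if_pos (mem_compl.mpr hT), sq_abs]
    · rw [if_neg hq]
      split_ifs <;> positivity
  rw [← Real.sqrt_sq (l2norm_nonneg _), l2norm_block_sq, ← Equiv.sum_comp σ]
  refine Real.sqrt_le_sqrt ((sum_le_sum fun q _ => hpointwise q).trans ?_)
  rw [Fin.sum_univ_eq_sum_range (fun q => if q ∈ I then c q ^ 2 else 0), sum_ite_mem]
  exact sum_le_sum_of_subset_of_nonneg inter_subset_right fun q _ _ => sq_nonneg _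

end TailLabel

lemma exists_block_labeling {p m : ℕ} (hm : 0 < m) (h : Fin p → ℝ) {T₀ : Finset (Fin p)}
    (hT₀ : #T₀ ≤ 2 * m) (hcone : ∑ i ∈ T₀ᶜ, |h i| ≤ ∑ i ∈ T₀, |h i|) :
    ∃ ℓ : Fin p → ℕ, (∀ i, ℓ i ≤ p) ∧ #{i | ℓ i = 0} ≤ 3 * m ∧
      (∀ j, #{i | ℓ i = j + 1} ≤ 2 * m) ∧
      ∑ j ∈ range p, l2norm (block ℓ h (j + 1)) ≤ l2norm (block ℓ h 0) := by
  obtain ⟨σ, c, hc, hc0, hcx, hc_zero⟩ :=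
    exists_antitone_rearrangement (fun i => if i ∈ T₀ᶜ then |h i| else 0)
      fun i => by split_ifs <;> simp
  set ℓ := tailLabel T₀ σ m
  have hsum_c : ∑ q ∈ range (2 * m * p), c q = ∑ i ∈ T₀ᶜ, |h i| := by
    rw [← sum_subset (range_subset_range.mpr (show p ≤ 2 * m * p by nlinarith))
      fun q _ hq => hc_zero q (by simpa using hq), ← Fin.sum_univ_eq_sum_range]
    simp only [hcx]
    rw [Equiv.sum_comp σ (fun i => if i ∈ T₀ᶜ then |h i| else 0), sum_ite_mem, univ_inter]
  have hhead : ∑ i ∈ T₀, |h i| ≤ Real.sqrt (2 * m) * l2norm (block ℓ h 0) :=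
    (sum_abs_le_sqrt_card_mul_l2norm_block ℓ h fun i hi => if_pos hi).trans
      (mul_le_mul_of_nonneg_right (Real.sqrt_le_sqrt (by exact_mod_cast hT₀)) (l2norm_nonneg _))
  refine ⟨ℓ, tailLabel_le T₀ σ hm, (card_tailLabel_eq_zero_le T₀ σ m).trans (by omega),
    card_tailLabel_eq_succ_le T₀ σ hm,
    le_of_mul_le_mul_left ?_ (by positivity : 0 < Real.sqrt (2 * m))⟩
  calc Real.sqrt (2 * m) * ∑ j ∈ range p, l2norm (block ℓ h (j + 1))
      ≤ Real.sqrt (2 * m) *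
        ∑ j ∈ range p, Real.sqrt (∑ q ∈ Ico (2 * m * j + m) (2 * m * j + 3 * m), c q ^ 2) := by
        gcongr with j
        exact l2norm_block_tailLabel_le T₀ σ hm h hcx j
    _ ≤ ∑ q ∈ range (2 * m * p), c q := sqrt_two_mul_sum_sqrt_sum_sq_le hc hc0 m p
    _ = ∑ i ∈ T₀ᶜ, |h i| := hsum_c
    _ ≤ ∑ i ∈ T₀, |h i| := hcone
    _ ≤ Real.sqrt (2 * m) * l2norm (block ℓ h 0) := hhead

lemma sum_compl_abs_sub_le_sum_abs_sub {p : ℕ} {β βhat : Fin p → ℝ} {T₀ : Finset (Fin p)}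
    (hβ : ∀ i ∉ T₀, β i = 0) (hl1 : l1norm βhat ≤ l1norm β) :
    ∑ i ∈ T₀ᶜ, |βhat i - β i| ≤ ∑ i ∈ T₀, |βhat i - β i| := by
  have hβ_l1 : l1norm β = ∑ i ∈ T₀, |β i| := by
    rw [l1norm, ← sum_add_sum_compl T₀,
      sum_eq_zero (s := T₀ᶜ) fun i hi => by simp [hβ i (mem_compl.mp hi)], add_zero]
  have hβhat_l1 : l1norm βhat = ∑ i ∈ T₀, |βhat i| + ∑ i ∈ T₀ᶜ, |βhat i - β i| := by
    rw [l1norm, ← sum_add_sum_compl T₀]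
    congr 1
    exact sum_congr rfl fun i hi => by simp [hβ i (mem_compl.mp hi)]
  have hT₀ : ∑ i ∈ T₀, |β i| ≤ ∑ i ∈ T₀, |βhat i| + ∑ i ∈ T₀, |βhat i - β i| := by
    rw [← sum_add_distrib]
    exact sum_le_sum fun i _ => by simpa using abs_sub (βhat i) (βhat i - β i)
  linarith

lemma l2norm_mulVec_sub_le {n p : ℕ} (F : Matrix (Fin n) (Fin p) ℝ) (y : Fin n → ℝ)
    (β βhat : Fin p → ℝ) :
    l2norm (F *ᵥ (βhat - β)) ≤ l2norm (fun i => y i - (F *ᵥ β) i) +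
      l2norm (fun i => y i - (F *ᵥ βhat) i) := by
  have hsplit : F *ᵥ (βhat - β) = fun i => (y i - (F *ᵥ β) i) - (y i - (F *ᵥ βhat) i) := by
    funext i
    rw [mulVec_sub, Pi.sub_apply]
    ring
  exact hsplit ▸ l2norm_sub_le _ _

theorem l2_constrained_l1_error_sparse_general {n p m : ℕ} (F : Matrix (Fin n) (Fin p) ℝ)
    (hm : 1 ≤ m)
    (hcond : ripConst F (3 * m) + roConst F (2 * m) (3 * m) < 1)
    (β : Fin p → ℝ) (hβ : IsSparse (2 * m) β)
    (z : Fin n → ℝ) (y : Fin n → ℝ) (hy : y = fun i => F.mulVec β i + z i)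
    (ε η : ℝ) (hz : l2norm z ≤ ε) (hη : ε ≤ η)
    (βhat : Fin p → ℝ)
    (hfeas : l2norm (fun i => y i - F.mulVec βhat i) ≤ η)
    (hmin : ∀ γ : Fin p → ℝ, l2norm (fun i => y i - F.mulVec γ i) ≤ η →
      l1norm βhat ≤ l1norm γ) :
    l2norm (fun i => βhat i - β i) ≤
      (Real.sqrt 2 * (1 + ripConst F (3 * m)) /
        (1 - ripConst F (3 * m) - roConst F (2 * m) (3 * m))) * (η + ε) := by
  obtain ⟨T₀, hT₀, hβ0⟩ := hβ
  have hnoise : (fun i => y i - (F *ᵥ β) i) = z := by subst hy; simp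
  have hcone : ∑ i ∈ T₀ᶜ, |βhat i - β i| ≤ ∑ i ∈ T₀, |βhat i - β i| :=
    sum_compl_abs_sub_le_sum_abs_sub hβ0 (hmin β (hnoise ▸ hz.trans hη))
  have htube : l2norm (F *ᵥ (βhat - β)) ≤ η + ε := by
    linarith [hnoise ▸ l2norm_mulVec_sub_le F y β βhat]
  obtain ⟨ℓ, hℓ, hcard₀, hcard, htail⟩ := exists_block_labeling hm (βhat - β) hT₀ hcone
  have hX := one_sub_ripConst_sub_roConst_mul_le F (3 * m) (2 * m) _ ℓ hℓ hcard₀ hcard htail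
  set δ := ripConst F (3 * m)
  set θ := roConst F (2 * m) (3 * m)
  have hδ : 0 ≤ δ := ripConst_nonneg F (3 * m)
  have hsqrt : Real.sqrt (1 + δ) ≤ 1 + δ := Real.sqrt_le_self_iff.mpr (Or.inr (by linarith))
  calc l2norm (βhat - β) ≤ Real.sqrt 2 * l2norm (block ℓ (βhat - β) 0) :=
        l2norm_le_sqrt_two_mul_l2norm_block_zero ℓ _ hℓ htail
    _ ≤ Real.sqrt 2 * ((1 + δ) * (η + ε) / (1 - δ - θ)) := by
      gcongr
      rw [le_div_iff₀ (by linarith), mul_comm]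
      exact hX.trans (mul_le_mul hsqrt htube (l2norm_nonneg _) (by linarith))
    _ = _ := by ring

/-- ℓ₁ minimization under an ℓ₂ constraint, `k`-sparse `β`.
With `k = 2*m` even, `δ_{1.5k} + θ_{k,1.5k} < 1`, `y = Fβ + z`, `‖z‖₂ ≤ ε ≤ η`, if `β̂`
minimizes the ℓ₁ norm subject to `‖y - Fγ‖₂ ≤ η`, then `‖β̂ - β‖₂ ≤ C(η + ε)` where
`C = √2(1 + δ_{1.5k}) / (1 - δ_{1.5k} - θ_{k,1.5k})`. -/
theorem l2_constrained_l1_error_sparse {n p m : ℕ} (F : Matrix (Fin n) (Fin p) ℝ)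
    (hm : 1 ≤ m) (hp : 5 * m ≤ p)
    (hcond : ripConst F (3 * m) + roConst F (2 * m) (3 * m) < 1)
    (β : Fin p → ℝ) (hβ : IsSparse (2 * m) β)
    (z : Fin n → ℝ) (y : Fin n → ℝ) (hy : y = fun i => F.mulVec β i + z i)
    (ε η : ℝ) (hz : l2norm z ≤ ε) (hη : ε ≤ η)
    (βhat : Fin p → ℝ)
    (hfeas : l2norm (fun i => y i - F.mulVec βhat i) ≤ η)
    (hmin : ∀ γ : Fin p → ℝ, l2norm (fun i => y i - F.mulVec γ i) ≤ η →
      l1norm βhat ≤ l1norm γ) :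
    l2norm (fun i => βhat i - β i) ≤
      (Real.sqrt 2 * (1 + ripConst F (3 * m)) /
        (1 - ripConst F (3 * m) - roConst F (2 * m) (3 * m))) * (η + ε) :=
  l2_constrained_l1_error_sparse_general F hm hcond β hβ z y hy ε η hz hη βhat hfeas hmin
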